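/- (Impens's inequality) For all real x > 0 and all natural numbers n, m ≥ 0, R_{2n}(x) < ln Γ(x) − P(x) < R_{2m+1}(x). -/

import Mathlib

open Real

/-- `P x = x ln x − x − (1/2) ln x + (1/2) ln (2π)`. -/
noncomputable def stirlingP (x : ℝ) : ℝ :=
  x * Real.log x - x - (1 / 2) * Real.log x + (1 / 2) * Real.log (2 * π)

/-- `R_N x = Σ_{k=1}^N B_{2k} / (2k (2k−1) x^(2k−1))`, with `B_j` the Bernoulli numbers. -/
noncomputable def stirlingR (N : ℕ) (x : ℝ) : ℝ :=
  ∑ k ∈ Finset.Icc 1 N,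
    ((bernoulli (2 * k) : ℚ) : ℝ) / (2 * k * (2 * k - 1) * x ^ (2 * k - 1))


section ImpensAux

open Real Filter Polynomial Topology

noncomputable def Bp (m : ℕ) : Polynomial ℝ := (Polynomial.bernoulli m).map (algebraMap ℚ ℝ)

noncomputable def bb (m : ℕ) : ℝ := ((bernoulli m : ℚ) : ℝ)

lemma Bp_eval_rat (m : ℕ) (q : ℚ) : (Bp m).eval ((q : ℝ)) = (((Polynomial.bernoulli m).eval q : ℚ) : ℝ) := by
  rw [Bp, Polynomial.eval_map, ← Polynomial.aeval_def,
    show ((q:ℝ)) = algebraMap ℚ ℝ q from rfl, Polynomial.aeval_algebraMap_apply]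
  simp

lemma Bp_eval_zero (m : ℕ) : (Bp m).eval 0 = bb m := by
  have := Bp_eval_rat m 0
  simpa [bb, Polynomial.bernoulli_eval_zero] using this

lemma Bp_eval_one (m : ℕ) : (Bp m).eval 1 = ((bernoulli' m : ℚ) : ℝ) := by
  have := Bp_eval_rat m 1
  simpa [Polynomial.bernoulli_eval_one] using this

lemma hasDerivAt_Bp (m : ℕ) (t : ℝ) :
    HasDerivAt (fun s => (Bp (m+1)).eval s) (((m:ℝ)+1) * (Bp m).eval t) t := by
  have h := (Bp (m+1)).hasDerivAt t
  have hd : (Bp (m+1)).derivative = Polynomial.C ((m:ℝ)+1) * Bp m := by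
    rw [Bp, derivative_map, Polynomial.derivative_bernoulli (m+1)]
    simp only [Nat.add_sub_cancel, Polynomial.map_mul, Bp]
    congr 1
    rw [Polynomial.map_natCast]
    rw [show ((m+1 : ℕ) : Polynomial ℝ) = Polynomial.C ((m:ℝ)+1) by push_cast; simp]
  rw [hd] at h
  simpa using h

lemma Bp_reflect (m : ℕ) (t : ℝ) : (Bp m).eval (1 - t) = (-1)^m * (Bp m).eval t := by
  induction m generalizing t with
  | zero => simp [Bp]
  | succ m ih =>
    have key : ∀ s : ℝ, (Bp (m+1)).eval (1 - s) - (-1)^(m+1) * (Bp (m+1)).eval s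
        = (Bp (m+1)).eval 1 - (-1)^(m+1) * (Bp (m+1)).eval 0 := by
      intro s
      have hder : ∀ s : ℝ, HasDerivAt
          (fun u => (Bp (m+1)).eval (1 - u) - (-1)^(m+1) * (Bp (m+1)).eval u) 0 s := by
        intro s
        have h1 : HasDerivAt (fun u : ℝ => (Bp (m+1)).eval (1 - u))
            (-(((m:ℝ)+1) * (Bp m).eval (1 - s))) s := by
          have := (hasDerivAt_Bp m (1 - s)).comp s
            (((hasDerivAt_id s).neg).const_add 1)
          simpa [mul_comm, Function.comp_def] using this
        have h2 := ((hasDerivAt_Bp m s).const_mul ((-1:ℝ)^(m+1)))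
        have := h1.sub h2
        refine this.congr_deriv ?_
        rw [ih s]
        ring
      have := fun s => (hder s)
      have hconst := is_const_of_deriv_eq_zero (f := fun u =>
          (Bp (m+1)).eval (1 - u) - (-1)^(m+1) * (Bp (m+1)).eval u)
        (fun u => (hder u).differentiableAt) (fun u => (hder u).deriv) s 0
      simpa using hconst
    have h0 : (Bp (m+1)).eval 1 - (-1)^(m+1) * (Bp (m+1)).eval 0 = 0 := by
      rw [Bp_eval_one, Bp_eval_zero, bb]
      rw [bernoulli'_eq_bernoulli]
      push_cast
      ring
    have := key t
    rw [h0] at this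
    linarith

lemma Bp_one_eval (t : ℝ) : (Bp 1).eval t = t - 1/2 := by
  have h : (Polynomial.bernoulli 1) = Polynomial.X - Polynomial.C (1/2 : ℚ) := by
    rw [Polynomial.bernoulli_def]
    simp [Finset.sum_range_succ, _root_.bernoulli_zero, _root_.bernoulli_one,
      Polynomial.monomial_one_one_eq_X]
    rw [show (-1/2 : ℚ) = -(2⁻¹) by norm_num, Polynomial.C_neg]
    ring
  rw [Bp, h]
  simp

lemma hasDerivAt_Bp' (m k : ℕ) (h : k + 1 = m) {d : ℝ} (hd : ((k:ℝ)+1) = d) (t : ℝ) :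
    HasDerivAt (fun s => (Bp m).eval s) (d * (Bp k).eval t) t := by
  subst h; subst hd; exact hasDerivAt_Bp k t

lemma bb_odd_eq_zero {m : ℕ} (hm : Odd m) (h1 : 1 < m) : bb m = 0 := by
  rw [bb, bernoulli_eq_bernoulli'_of_ne_one (by omega), bernoulli'_eq_zero_of_odd hm h1]
  simp

lemma Bp_half_odd {m : ℕ} (hm : Odd m) : (Bp m).eval (1/2) = 0 := by
  have := Bp_reflect m (1/2)
  rw [Odd.neg_one_pow hm] at this
  norm_num at this
  linarith

lemma Bp_odd_sign (N : ℕ) : ∀ t ∈ Set.Ioo (0:ℝ) (1/2), 0 < (-1)^(N+1) * (Bp (2*N+1)).eval t := by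
  induction N with
  | zero =>
    intro t ht
    rw [Bp_one_eval]
    norm_num
    nlinarith [ht.1, ht.2]
  | succ N ih =>
    set f : ℝ → ℝ := fun t => (-1:ℝ)^(N+2) * (Bp (2*N+3)).eval t with hf
    have hd1 : ∀ t : ℝ, HasDerivAt f ((-1:ℝ)^(N+2) * (((2:ℝ)*N+3) * (Bp (2*N+2)).eval t)) t :=
      fun t => (hasDerivAt_Bp' (2*N+3) (2*N+2) (by omega) (by push_cast; ring) t).const_mul _
    have hd2 : ∀ t : ℝ, HasDerivAt (fun t => (-1:ℝ)^(N+2) * (((2:ℝ)*N+3) * (Bp (2*N+2)).eval t))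
        ((-1:ℝ)^(N+2) * (((2:ℝ)*N+3) * (((2:ℝ)*N+2) * (Bp (2*N+1)).eval t))) t :=
      fun t => (((hasDerivAt_Bp' (2*N+2) (2*N+1) (by omega) (by push_cast; ring) t).const_mul
        ((2:ℝ)*N+3)).const_mul _)
    have hderiv1 : deriv f = fun t => (-1:ℝ)^(N+2) * (((2:ℝ)*N+3) * (Bp (2*N+2)).eval t) :=
      funext fun t => (hd1 t).deriv
    have hconc : StrictConcaveOn ℝ (Set.Icc (0:ℝ) (1/2)) f := by
      apply strictConcaveOn_of_deriv2_neg (convex_Icc _ _)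
        ((continuous_const.mul (Bp (2*N+3)).continuous).continuousOn)
      intro t ht
      rw [interior_Icc] at ht
      have h2 : deriv (deriv f) t
          = (-1:ℝ)^(N+2) * (((2:ℝ)*N+3) * (((2:ℝ)*N+2) * (Bp (2*N+1)).eval t)) := by
        rw [hderiv1]; exact (hd2 t).deriv
      show deriv^[2] f t < 0
      rw [Function.iterate_succ, Function.iterate_one, Function.comp_apply, h2]
      have hih := ih t ht
      have hsign : (-1:ℝ)^(N+2) * (Bp (2*N+1)).eval t < 0 := by
        have h1 : (-1:ℝ)^(N+2) = -((-1:ℝ)^(N+1)) := by ring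
        rw [h1]
        nlinarith
      have hp : (0:ℝ) < (2*(N:ℝ)+3)*(2*(N:ℝ)+2) := by positivity
      have h3 : (-1:ℝ)^(N+2) * (((2:ℝ)*N+3) * (((2:ℝ)*N+2) * (Bp (2*N+1)).eval t))
          = (2*(N:ℝ)+3)*(2*(N:ℝ)+2)*((-1:ℝ)^(N+2) * (Bp (2*N+1)).eval t) := by ring
      rw [h3]
      exact mul_neg_of_pos_of_neg hp hsign
    intro t ht
    have hz0 : f 0 = 0 := by
      rw [hf]; simp only
      rw [Bp_eval_zero, bb_odd_eq_zero ⟨N+1, by ring⟩ (by omega)]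
      ring
    have hzh : f (1/2) = 0 := by
      rw [hf]; simp only
      rw [Bp_half_odd ⟨N+1, by ring⟩]
      ring
    have h0m : (0:ℝ) ∈ Set.Icc (0:ℝ) (1/2) := by constructor <;> norm_num
    have hhm : (1/2:ℝ) ∈ Set.Icc (0:ℝ) (1/2) := by constructor <;> norm_num
    have hcomb := hconc.2 h0m hhm (show (0:ℝ) ≠ 1/2 by norm_num)
      (show (0:ℝ) < 1 - 2*t by nlinarith [ht.2]) (show (0:ℝ) < 2*t by nlinarith [ht.1])
      (show (1-2*t) + (2*t) = 1 by ring)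
    have harg : (1-2*t) • (0:ℝ) + (2*t) • (1/2:ℝ) = t := by
      simp [smul_eq_mul]; ring
    rw [harg, hz0, hzh] at hcomb
    simp only [smul_eq_mul, mul_zero, add_zero, zero_add] at hcomb
    have hft : 0 < f t := by nlinarith
    rw [show 2*(N+1)+1 = 2*N+3 from by ring, show N+1+1 = N+2 from rfl]
    exact hft

/-! Definitions of the elementary functions. -/

noncomputable def gI (y : ℝ) : ℝ := (y + 1/2) * (Real.log (y+1) - Real.log y) - 1
noncomputable def gI' (y : ℝ) : ℝ := (Real.log (y+1) - Real.log y) + (y + 1/2) * ((y+1)⁻¹ - y⁻¹)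
noncomputable def RzI (N : ℕ) (y : ℝ) : ℝ :=
  ∑ j ∈ Finset.range N, bb (2*j+2) / ((2*(j:ℝ)+2) * (2*(j:ℝ)+1)) * y ^ (-(2*(j:ℤ)+1))
noncomputable def Rz1 (N : ℕ) (y : ℝ) : ℝ :=
  ∑ j ∈ Finset.range N, -(bb (2*j+2) / (2*(j:ℝ)+2)) * y ^ (-(2*(j:ℤ)+2))
noncomputable def Rz2 (N : ℕ) (y : ℝ) : ℝ :=
  ∑ j ∈ Finset.range N, bb (2*j+2) * y ^ (-(2*(j:ℤ)+3))
noncomputable def h0 (N : ℕ) (y : ℝ) : ℝ := gI y - RzI N y + RzI N (y+1)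
noncomputable def h1 (N : ℕ) (y : ℝ) : ℝ := gI' y - Rz1 N y + Rz1 N (y+1)
noncomputable def h2 (N : ℕ) (y : ℝ) : ℝ := 1/(2*y^2*(y+1)^2) - Rz2 N y + Rz2 N (y+1)
noncomputable def Jint (m : ℕ) (y : ℝ) : ℝ :=
  ∫ t in (0:ℝ)..1, (Bp m).eval t * (y+t) ^ (-(m:ℤ)-2)

lemma zpow_negnat (a : ℝ) (k : ℕ) : a ^ (-(k:ℤ)) = (a^k)⁻¹ := by
  rw [zpow_neg, zpow_natCast]

lemma hasDerivAt_zpow_shift {y t : ℝ} (h : y + t ≠ 0) (n : ℤ) :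
    HasDerivAt (fun t => (y+t) ^ n) ((n:ℝ) * (y+t)^(n-1)) t := by
  have h1 := hasDerivAt_zpow n (y+t) (Or.inl h)
  have h2 : HasDerivAt (fun t : ℝ => y + t) 1 t := (hasDerivAt_id t).const_add y
  simpa [Function.comp_def] using h1.comp t h2

lemma cont_zpow_shift {y : ℝ} (hy : 0 < y) (n : ℤ) {a b : ℝ} (ha : 0 ≤ a) :
    ContinuousOn (fun t : ℝ => (y+t) ^ n) (Set.Icc a b) := by
  apply ContinuousOn.zpow₀ (by fun_prop)
  intro t ht
  left
  have h1 : 0 ≤ t := le_trans ha ht.1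
  positivity

lemma integrable_eval_zpow {y : ℝ} (hy : 0 < y) (m : ℕ) (n : ℤ) {a b : ℝ}
    (ha : 0 ≤ a) (hab : a ≤ b) :
    IntervalIntegrable (fun t => (Bp m).eval t * (y+t) ^ n) MeasureTheory.volume a b := by
  apply ContinuousOn.intervalIntegrable
  rw [Set.uIcc_of_le hab]
  exact ((Bp m).continuous.continuousOn).mul (cont_zpow_shift hy n ha)

lemma Jstep (m : ℕ) {y : ℝ} (hy : 0 < y) :
    Jint m y = ((Bp (m+1)).eval 1 * (y+1) ^ (-(m:ℤ)-2) - (Bp (m+1)).eval 0 * y ^ (-(m:ℤ)-2))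
        / ((m:ℝ)+1) + (((m:ℝ)+2)/((m:ℝ)+1)) * Jint (m+1) y := by
  have hm1 : ((m:ℝ)+1) ≠ 0 := by positivity
  set p : ℤ := -(m:ℤ)-2 with hp
  set A : ℝ → ℝ := fun t => (Bp (m+1)).eval t / ((m:ℝ)+1) * (y+t) ^ p with hA
  have hne : ∀ t ∈ Set.uIcc (0:ℝ) 1, y + t ≠ 0 := by
    intro t ht
    rw [Set.uIcc_of_le zero_le_one] at ht
    have := ht.1
    positivity
  have hder : ∀ t ∈ Set.uIcc (0:ℝ) 1, HasDerivAt A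
      ((Bp m).eval t * (y+t) ^ p
        + (Bp (m+1)).eval t / ((m:ℝ)+1) * ((p:ℝ) * (y+t) ^ (p-1))) t := by
    intro t ht
    have h1 : HasDerivAt (fun s => (Bp (m+1)).eval s / ((m:ℝ)+1)) ((Bp m).eval t) t := by
      refine ((hasDerivAt_Bp m t).div_const ((m:ℝ)+1)).congr_deriv ?_
      field_simp
    exact h1.mul (hasDerivAt_zpow_shift (hne t ht) p)
  have hint1 : IntervalIntegrable (fun t => (Bp m).eval t * (y+t) ^ p)
      MeasureTheory.volume 0 1 := integrable_eval_zpow hy m p le_rfl zero_le_one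
  have hint2 : IntervalIntegrable
      (fun t => (Bp (m+1)).eval t / ((m:ℝ)+1) * ((p:ℝ) * (y+t) ^ (p-1)))
      MeasureTheory.volume 0 1 := by
    have := (integrable_eval_zpow hy (m+1) (p-1) le_rfl zero_le_one).const_mul ((p:ℝ)/((m:ℝ)+1))
    apply this.congr
    · intro t _; ring
  have hsub := intervalIntegral.integral_eq_sub_of_hasDerivAt hder (hint1.add hint2)
  rw [intervalIntegral.integral_add hint1 hint2] at hsub
  have hJ2 : ∫ t in (0:ℝ)..1, (Bp (m+1)).eval t / ((m:ℝ)+1) * ((p:ℝ) * (y+t) ^ (p-1))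
      = ((p:ℝ)/((m:ℝ)+1)) * Jint (m+1) y := by
    rw [Jint, ← intervalIntegral.integral_const_mul]
    apply intervalIntegral.integral_congr
    intro t _
    have hexp : (-((m+1:ℕ):ℤ)-2) = p - 1 := by push_cast [hp]; ring
    rw [hexp]
    ring
  rw [hJ2] at hsub
  have hpval : (p:ℝ) = -((m:ℝ)+2) := by push_cast [hp]; ring
  have : Jint m y = A 1 - A 0 - ((p:ℝ)/((m:ℝ)+1)) * Jint (m+1) y := by
    rw [Jint]; linarith [hsub]
  rw [this, hA, hpval]
  simp only
  field_simp
  ring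

lemma uIcc_pos {y t : ℝ} (hy : 0 < y) (ht : t ∈ Set.uIcc (0:ℝ) 1) : 0 < y + t := by
  rw [Set.uIcc_of_le zero_le_one] at ht
  have := ht.1
  positivity

lemma Jint_one {y : ℝ} (hy : 0 < y) : h2 0 y = -2 * Jint 1 y := by
  have hy0 : y ≠ 0 := ne_of_gt hy
  have hy1 : y + 1 ≠ 0 := by positivity
  set A : ℝ → ℝ := fun t => -((t-1/2)/2) * (y+t) ^ (-2:ℤ) - (1/2) * (y+t) ^ (-1:ℤ) with hA
  have hder : ∀ t ∈ Set.uIcc (0:ℝ) 1,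
      HasDerivAt A ((Bp 1).eval t * (y+t) ^ (-((1:ℕ):ℤ)-2)) t := by
    intro t ht
    have hne : y + t ≠ 0 := ne_of_gt (uIcc_pos hy ht)
    have hd1 : HasDerivAt (fun t : ℝ => -((t-1/2)/2)) (-(1/2)) t := by
      have := (((hasDerivAt_id t).sub_const (1/2)).div_const 2).neg
      exact this.congr_deriv (by simp)
    have hmul := hd1.mul (hasDerivAt_zpow_shift hne (-2:ℤ))
    have hd2 := (hasDerivAt_zpow_shift hne (-1:ℤ)).const_mul (1/2:ℝ)
    have := hmul.sub hd2
    refine this.congr_deriv ?_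
    rw [Bp_one_eval]
    have e1 : (y+t) ^ (-((1:ℕ):ℤ)-2) = ((y+t)^3)⁻¹ := by
      rw [show (-((1:ℕ):ℤ)-2) = -((3:ℕ):ℤ) by norm_num, zpow_negnat]
    have e2 : (y+t) ^ (-2:ℤ) = ((y+t)^2)⁻¹ := by
      rw [show (-2:ℤ) = -((2:ℕ):ℤ) by norm_num, zpow_negnat]
    have e3 : (y+t) ^ (-2-1:ℤ) = ((y+t)^3)⁻¹ := by
      rw [show (-2-1:ℤ) = -((3:ℕ):ℤ) by norm_num, zpow_negnat]
    have e4 : (y+t) ^ (-1-1:ℤ) = ((y+t)^2)⁻¹ := by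
      rw [show (-1-1:ℤ) = -((2:ℕ):ℤ) by norm_num, zpow_negnat]
    rw [e1, e2, e3, e4]
    push_cast
    field_simp
    ring
  have hint : IntervalIntegrable (fun t => (Bp 1).eval t * (y+t) ^ (-((1:ℕ):ℤ)-2))
      MeasureTheory.volume 0 1 := integrable_eval_zpow hy 1 _ le_rfl zero_le_one
  have hsub := intervalIntegral.integral_eq_sub_of_hasDerivAt hder hint
  have hJ : Jint 1 y = A 1 - A 0 := hsub
  rw [h2, hJ, hA]
  simp only [Rz2, Finset.range_zero, Finset.sum_empty]
  have e2 : ∀ s : ℝ, s ≠ 0 → s ^ (-2:ℤ) = (s^2)⁻¹ := by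
    intro s _
    rw [show (-2:ℤ) = -((2:ℕ):ℤ) by norm_num, zpow_negnat]
  have e1 : ∀ s : ℝ, s ≠ 0 → s ^ (-1:ℤ) = s⁻¹ := by
    intro s _
    simp
  simp only [add_zero]
  rw [e2 _ hy1, e2 _ hy0, e1 _ hy1, e1 _ hy0]
  field_simp
  ring

lemma h2_eq (N : ℕ) {y : ℝ} (hy : 0 < y) :
    h2 N y = -(2*((N:ℕ):ℝ)+2) * Jint (2*N+1) y := by
  induction N with
  | zero => simpa using Jint_one hy
  | succ N ih =>
    have hstep1 := Jstep (2*N+1) hy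
    have hstep2 := Jstep (2*N+2) hy
    rw [show 2*N+1+1 = 2*N+2 from by omega] at hstep1
    rw [show 2*N+2+1 = 2*N+3 from by omega] at hstep2
    have hBe : (Bp (2*N+2)).eval 1 = bb (2*N+2) := by
      rw [Bp_eval_one, bb, bernoulli_eq_bernoulli'_of_ne_one (by omega)]
    have hBe0 : (Bp (2*N+2)).eval 0 = bb (2*N+2) := Bp_eval_zero _
    have hodd : Odd (2*N+3) := ⟨N+1, by ring⟩
    have hBo1 : (Bp (2*N+3)).eval 1 = 0 := by
      rw [Bp_eval_one, bernoulli'_eq_zero_of_odd hodd (by omega)]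
      simp
    have hBo0 : (Bp (2*N+3)).eval 0 = 0 := by
      rw [Bp_eval_zero, bb_odd_eq_zero hodd (by omega)]
    rw [hBe, hBe0] at hstep1
    rw [hBo1, hBo0] at hstep2
    push_cast at hstep1 hstep2 ⊢
    rw [show (-(2*(N:ℤ)+1)-2) = -(2*(N:ℤ)+3) from by ring] at hstep1
    rw [show (2*(N+1)+1) = 2*N+3 from by omega]
    have hsplit : h2 (N+1) y = h2 N y - bb (2*N+2) * y ^ (-(2*(N:ℤ)+3))
        + bb (2*N+2) * (y+1) ^ (-(2*(N:ℤ)+3)) := by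
      simp only [h2, Rz2, Finset.sum_range_succ]
      ring
    rw [hsplit, ih, hstep1, hstep2]
    push_cast
    have c1 : (2*(N:ℝ)+2) ≠ 0 := by positivity
    have c2 : (2*(N:ℝ)+3) ≠ 0 := by positivity
    field_simp
    ring

lemma Jint_sign (N : ℕ) {y : ℝ} (hy : 0 < y) : 0 < (-1:ℝ)^(N+1) * Jint (2*N+1) y := by
  set p : ℤ := -((2*N+1:ℕ):ℤ)-2 with hp
  set f : ℝ → ℝ := fun t => (Bp (2*N+1)).eval t * (y+t) ^ p with hf
  have hi1 : IntervalIntegrable f MeasureTheory.volume 0 (1/2) :=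
    integrable_eval_zpow hy _ p le_rfl (by norm_num)
  have hi2 : IntervalIntegrable f MeasureTheory.volume (1/2) 1 :=
    integrable_eval_zpow hy _ p (by norm_num) (by norm_num)
  have hi1' : IntervalIntegrable (fun t => f (1-t)) MeasureTheory.volume 0 (1/2) := by
    apply ContinuousOn.intervalIntegrable
    rw [Set.uIcc_of_le (by norm_num : (0:ℝ) ≤ 1/2)]
    apply ContinuousOn.mul
    · exact ((Bp (2*N+1)).continuous.comp (by fun_prop)).continuousOn
    · apply ContinuousOn.zpow₀
      · fun_prop
      · intro t ht
        left
        have h1 := ht.1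
        have h2 := ht.2
        have : (0:ℝ) < 1 - t := by linarith
        positivity
  have hsplit : Jint (2*N+1) y = (∫ t in (0:ℝ)..(1/2), f t) + ∫ t in (1/2:ℝ)..1, f t :=
    (intervalIntegral.integral_add_adjacent_intervals hi1 hi2).symm
  have hsub : ∫ t in (1/2:ℝ)..1, f t = ∫ t in (0:ℝ)..(1/2), f (1-t) := by
    rw [intervalIntegral.integral_comp_sub_left f 1]
    norm_num
  have hcomb : Jint (2*N+1) y = ∫ t in (0:ℝ)..(1/2), (f t + f (1-t)) := by
    rw [hsplit, hsub, intervalIntegral.integral_add hi1 hi1']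
  have hptwise : ∀ t ∈ Set.Ioo (0:ℝ) (1/2), 0 < (-1:ℝ)^(N+1) * (f t + f (1-t)) := by
    intro t ht
    have hrefl := Bp_reflect (2*N+1) (t)
    have hoddp : Odd (2*N+1) := ⟨N, by ring⟩
    have heq : f t + f (1-t) = (Bp (2*N+1)).eval t * ((y+t) ^ p - (y+(1-t)) ^ p) := by
      simp only [hf]
      rw [hrefl, Odd.neg_one_pow hoddp]
      ring
    rw [heq]
    have hBp := Bp_odd_sign N t ht
    have hlt : (y+(1-t)) ^ p < (y+t) ^ p := by
      have h1 : 0 < y + t := by nlinarith [ht.1]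
      have h2 : y + t < y + (1-t) := by nlinarith [ht.2]
      rw [show p = -((2*N+3:ℕ):ℤ) from by rw [hp]; push_cast; ring]
      rw [zpow_negnat, zpow_negnat]
      exact inv_strictAnti₀ (by positivity) (pow_lt_pow_left₀ h2 (le_of_lt h1) (by omega))
    nlinarith [hBp, sub_pos.mpr hlt]
  have hii : IntervalIntegrable (fun t => (-1:ℝ)^(N+1) * (f t + f (1-t)))
      MeasureTheory.volume 0 (1/2) := ((hi1.add hi1').const_mul _)
  have hpos := intervalIntegral.intervalIntegral_pos_of_pos_on hii hptwise (by norm_num)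
  rw [intervalIntegral.integral_const_mul] at hpos
  rw [← hcomb] at hpos
  exact hpos

lemma h2_sign (N : ℕ) {y : ℝ} (hy : 0 < y) : 0 < (-1:ℝ)^N * h2 N y := by
  have hJ := Jint_sign N hy
  rw [h2_eq N hy]
  rw [pow_succ] at hJ
  have hc : (0:ℝ) < 2*((N:ℕ):ℝ)+2 := by positivity
  nlinarith [hJ, hc]

/-! Derivatives of `h0` and `h1`. -/

lemma hasDerivAt_RzI (N : ℕ) {y : ℝ} (hy : y ≠ 0) :
    HasDerivAt (fun z => RzI N z) (Rz1 N y) y := by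
  apply HasDerivAt.fun_sum
  intro j _
  have hj2 : (2*(j:ℝ)+2) ≠ 0 := by positivity
  have hj1 : (2*(j:ℝ)+1) ≠ 0 := by positivity
  have h := (hasDerivAt_zpow (-(2*(j:ℤ)+1)) y (Or.inl hy)).const_mul
    (bb (2*j+2) / ((2*(j:ℝ)+2) * (2*(j:ℝ)+1)))
  rw [show (-(2*(j:ℤ)+1)-1) = -(2*(j:ℤ)+2) from by ring] at h
  refine h.congr_deriv ?_
  push_cast
  field_simp

lemma hasDerivAt_Rz1 (N : ℕ) {y : ℝ} (hy : y ≠ 0) :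
    HasDerivAt (fun z => Rz1 N z) (Rz2 N y) y := by
  apply HasDerivAt.fun_sum
  intro j _
  have hj2 : (2*(j:ℝ)+2) ≠ 0 := by positivity
  have h := (hasDerivAt_zpow (-(2*(j:ℤ)+2)) y (Or.inl hy)).const_mul
    (-(bb (2*j+2) / (2*(j:ℝ)+2)))
  rw [show (-(2*(j:ℤ)+2)-1) = -(2*(j:ℤ)+3) from by ring] at h
  refine h.congr_deriv ?_
  push_cast
  field_simp

lemma hasDerivAt_gI {y : ℝ} (hy : 0 < y) : HasDerivAt gI (gI' y) y := by
  have hy1 : (0:ℝ) < y + 1 := by linarith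
  have hlog1 : HasDerivAt (fun z : ℝ => Real.log (z+1)) ((y+1)⁻¹) y := by
    have := (Real.hasDerivAt_log (ne_of_gt hy1)).comp y ((hasDerivAt_id y).add_const 1)
    simpa [Function.comp_def] using this
  have hlog0 : HasDerivAt Real.log y⁻¹ y := Real.hasDerivAt_log (ne_of_gt hy)
  have hmul := (((hasDerivAt_id y).add_const (1/2)).mul (hlog1.sub hlog0)).sub_const 1
  simp only [id_eq] at hmul
  refine hmul.congr_deriv ?_
  rw [gI']
  simp only [Pi.sub_apply]; ring

lemma hasDerivAt_gI' {y : ℝ} (hy : 0 < y) : HasDerivAt gI' (1/(2*y^2*(y+1)^2)) y := by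
  have hy1 : (0:ℝ) < y + 1 := by linarith
  have hlog1 : HasDerivAt (fun z : ℝ => Real.log (z+1)) ((y+1)⁻¹) y := by
    have := (Real.hasDerivAt_log (ne_of_gt hy1)).comp y ((hasDerivAt_id y).add_const 1)
    simpa [Function.comp_def] using this
  have hlog0 : HasDerivAt Real.log y⁻¹ y := Real.hasDerivAt_log (ne_of_gt hy)
  have hinv1 : HasDerivAt (fun z : ℝ => (z+1)⁻¹) (-((y+1)^2)⁻¹) y := by
    have := (hasDerivAt_inv (ne_of_gt hy1)).comp y ((hasDerivAt_id y).add_const 1)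
    simpa [Function.comp_def] using this
  have hinv0 : HasDerivAt (fun z : ℝ => z⁻¹) (-(y^2)⁻¹) y := hasDerivAt_inv (ne_of_gt hy)
  have h := (hlog1.sub hlog0).add
    (((hasDerivAt_id y).add_const (1/2)).mul (hinv1.sub hinv0))
  simp only [id_eq] at h
  refine h.congr_deriv ?_
  have h0 : y ≠ 0 := ne_of_gt hy
  have h1 : y + 1 ≠ 0 := ne_of_gt hy1
  simp only [Pi.sub_apply]; field_simp
  ring

lemma hasDerivAt_h0 (N : ℕ) {y : ℝ} (hy : 0 < y) : HasDerivAt (h0 N) (h1 N y) y := by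
  have hy1 : (0:ℝ) < y + 1 := by linarith
  have hshift : HasDerivAt (fun z => RzI N (z+1)) (Rz1 N (y+1)) y := by
    have := (hasDerivAt_RzI N (ne_of_gt hy1)).comp y ((hasDerivAt_id y).add_const 1)
    simpa [Function.comp_def] using this
  exact ((hasDerivAt_gI hy).sub (hasDerivAt_RzI N (ne_of_gt hy))).add hshift

lemma hasDerivAt_h1 (N : ℕ) {y : ℝ} (hy : 0 < y) : HasDerivAt (h1 N) (h2 N y) y := by
  have hy1 : (0:ℝ) < y + 1 := by linarith
  have hshift : HasDerivAt (fun z => Rz1 N (z+1)) (Rz2 N (y+1)) y := by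
    have := (hasDerivAt_Rz1 N (ne_of_gt hy1)).comp y ((hasDerivAt_id y).add_const 1)
    simpa [Function.comp_def] using this
  exact ((hasDerivAt_gI' hy).sub (hasDerivAt_Rz1 N (ne_of_gt hy))).add hshift

/-! Limits at infinity. -/

lemma tendsto_zpow_neg_nat (k : ℕ) :
    Filter.Tendsto (fun y : ℝ => y ^ (-(k:ℤ)-1)) Filter.atTop (𝓝 0) := by
  apply tendsto_zpow_atTop_zero
  omega

lemma tendsto_RzI (N : ℕ) : Filter.Tendsto (fun y => RzI N y) Filter.atTop (𝓝 0) := by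
  have : Filter.Tendsto (fun y : ℝ => ∑ j ∈ Finset.range N,
      bb (2*j+2) / ((2*(j:ℝ)+2) * (2*(j:ℝ)+1)) * y ^ (-(2*(j:ℤ)+1))) Filter.atTop
      (𝓝 (∑ j ∈ Finset.range N, (0:ℝ))) := by
    apply tendsto_finset_sum
    intro j _
    have h := (tendsto_zpow_neg_nat (2*j)).const_mul (bb (2*j+2) / ((2*(j:ℝ)+2) * (2*(j:ℝ)+1)))
    rw [mul_zero] at h
    have he : (-((2*j:ℕ):ℤ)-1) = -(2*(j:ℤ)+1) := by push_cast; ring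
    rw [he] at h
    exact h
  simp only [Finset.sum_const_zero] at this; exact this

lemma tendsto_Rz1 (N : ℕ) : Filter.Tendsto (fun y => Rz1 N y) Filter.atTop (𝓝 0) := by
  have : Filter.Tendsto (fun y : ℝ => ∑ j ∈ Finset.range N,
      -(bb (2*j+2) / (2*(j:ℝ)+2)) * y ^ (-(2*(j:ℤ)+2))) Filter.atTop
      (𝓝 (∑ j ∈ Finset.range N, (0:ℝ))) := by
    apply tendsto_finset_sum
    intro j _
    have h := (tendsto_zpow_neg_nat (2*j+1)).const_mul (-(bb (2*j+2) / (2*(j:ℝ)+2)))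
    rw [mul_zero] at h
    have he : (-((2*j+1:ℕ):ℤ)-1) = -(2*(j:ℤ)+2) := by push_cast; ring
    rw [he] at h
    exact h
  simp only [Finset.sum_const_zero] at this; exact this

lemma tendsto_log_one_plus_inv :
    Filter.Tendsto (fun y : ℝ => Real.log (1 + 1/y)) Filter.atTop (𝓝 0) := by
  have h1 : Filter.Tendsto (fun y : ℝ => 1 + 1/y) Filter.atTop (𝓝 1) := by
    have := tendsto_inv_atTop_zero (𝕜 := ℝ)
    have h2 := this.const_add (1:ℝ)
    simpa [one_div] using h2
  have := ((Real.continuousAt_log one_ne_zero).tendsto).comp h1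
  simpa [Function.comp_def] using this

lemma tendsto_gI : Filter.Tendsto gI Filter.atTop (𝓝 0) := by
  have h1 := Real.tendsto_mul_log_one_add_div_atTop 1
  have h2 := tendsto_log_one_plus_inv.const_mul (1/2 : ℝ)
  rw [mul_zero] at h2
  have h3 : Filter.Tendsto (fun y : ℝ => y * Real.log (1+1/y) + (1/2) * Real.log (1+1/y) - 1)
      Filter.atTop (𝓝 0) := by
    have := (h1.add h2).sub_const 1
    simpa using this
  apply h3.congr'
  filter_upwards [Filter.eventually_gt_atTop (0:ℝ)] with y hy
  rw [gI]
  have hlog : Real.log (y+1) - Real.log y = Real.log (1+1/y) := by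
    rw [show (1+1/y) = (y+1)/y from by field_simp, Real.log_div (by positivity) (ne_of_gt hy)]
  rw [hlog]
  ring

lemma tendsto_gI' : Filter.Tendsto gI' Filter.atTop (𝓝 0) := by
  have h2 : Filter.Tendsto (fun y : ℝ => (1/2) * (y+1)⁻¹) Filter.atTop (𝓝 0) := by
    have := (tendsto_inv_atTop_zero (𝕜 := ℝ)).comp (Filter.tendsto_atTop_add_const_right _ 1 Filter.tendsto_id)
    have h := this.const_mul (1/2:ℝ)
    rw [mul_zero] at h
    exact h
  have h3 : Filter.Tendsto (fun y : ℝ => (1/2) * y⁻¹) Filter.atTop (𝓝 0) := by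
    have h := (tendsto_inv_atTop_zero (𝕜 := ℝ)).const_mul (1/2:ℝ)
    rw [mul_zero] at h
    exact h
  have htot : Filter.Tendsto (fun y : ℝ => Real.log (1+1/y) + ((1 - (1/2)*(y+1)⁻¹) - (1 + (1/2)*y⁻¹)))
      Filter.atTop (𝓝 0) := by
    have ha : Filter.Tendsto (fun y : ℝ => (1 - (1/2)*(y+1)⁻¹) - (1 + (1/2)*y⁻¹))
        Filter.atTop (𝓝 0) := by
      have := ((tendsto_const_nhds (x := (1:ℝ))).sub h2).sub ((tendsto_const_nhds (x := (1:ℝ))).add h3)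
      simpa using this
    have := tendsto_log_one_plus_inv.add ha
    simpa using this
  apply htot.congr'
  filter_upwards [Filter.eventually_gt_atTop (0:ℝ)] with y hy
  have h0 : y ≠ 0 := ne_of_gt hy
  have h1 : y + 1 ≠ 0 := by positivity
  rw [gI']
  have hlog : Real.log (y+1) - Real.log y = Real.log (1+1/y) := by
    rw [show (1+1/y) = (y+1)/y from by field_simp, Real.log_div (by positivity) h0]
  rw [← hlog]
  field_simp
  ring

lemma tendsto_h0 (N : ℕ) : Filter.Tendsto (h0 N) Filter.atTop (𝓝 0) := by
  have hsh : Filter.Tendsto (fun y : ℝ => RzI N (y+1)) Filter.atTop (𝓝 0) :=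
    (tendsto_RzI N).comp (Filter.tendsto_atTop_add_const_right _ 1 Filter.tendsto_id)
  have := (tendsto_gI.sub (tendsto_RzI N)).add hsh
  simp at this; exact this

lemma tendsto_h1 (N : ℕ) : Filter.Tendsto (h1 N) Filter.atTop (𝓝 0) := by
  have hsh : Filter.Tendsto (fun y : ℝ => Rz1 N (y+1)) Filter.atTop (𝓝 0) :=
    (tendsto_Rz1 N).comp (Filter.tendsto_atTop_add_const_right _ 1 Filter.tendsto_id)
  have := (tendsto_gI'.sub (tendsto_Rz1 N)).add hsh
  simp at this; exact this

/-! Sign propagation. -/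

lemma neg_of_pos_deriv {f f' : ℝ → ℝ}
    (hder : ∀ y ∈ Set.Ioi (0:ℝ), HasDerivAt f (f' y) y)
    (hpos : ∀ y ∈ Set.Ioi (0:ℝ), 0 < f' y)
    (hlim : Filter.Tendsto f Filter.atTop (𝓝 0)) :
    ∀ y ∈ Set.Ioi (0:ℝ), f y < 0 := by
  have hmono : StrictMonoOn f (Set.Ioi 0) := by
    apply strictMonoOn_of_deriv_pos (convex_Ioi 0)
    · intro y hy
      exact ((hder y hy).differentiableAt.continuousAt).continuousWithinAt
    · intro y hy
      rw [interior_Ioi] at hy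
      rw [(hder y hy).deriv]
      exact hpos y hy
  intro y hy
  have hy' : (0:ℝ) < y := hy
  have hmem1 : y + 1 ∈ Set.Ioi (0:ℝ) := by simp; linarith
  have h1 : f y < f (y+1) := hmono hy hmem1 (by linarith)
  have h2 : f (y+1) ≤ 0 := by
    apply ge_of_tendsto hlim
    filter_upwards [Filter.eventually_gt_atTop (y+1)] with z hz
    exact le_of_lt (hmono hmem1 (by simp; linarith) hz)
  linarith

lemma pos_of_neg_deriv {f f' : ℝ → ℝ}
    (hder : ∀ y ∈ Set.Ioi (0:ℝ), HasDerivAt f (f' y) y)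
    (hneg : ∀ y ∈ Set.Ioi (0:ℝ), f' y < 0)
    (hlim : Filter.Tendsto f Filter.atTop (𝓝 0)) :
    ∀ y ∈ Set.Ioi (0:ℝ), 0 < f y := by
  have := neg_of_pos_deriv (f := fun y => -f y) (f' := fun y => -f' y)
    (fun y hy => (hder y hy).neg) (fun y hy => by simpa using hneg y hy)
    (by simpa using hlim.neg)
  intro y hy
  have := this y hy
  simpa using this

lemma h0_sign (N : ℕ) {y : ℝ} (hy : 0 < y) : 0 < (-1:ℝ)^N * h0 N y := by
  rcases Nat.even_or_odd N with hN | hN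
  · rw [hN.neg_one_pow, one_mul]
    have hh2 : ∀ z ∈ Set.Ioi (0:ℝ), 0 < h2 N z := by
      intro z hz
      have := h2_sign N (hz : (0:ℝ) < z)
      rwa [hN.neg_one_pow, one_mul] at this
    have hh1 : ∀ z ∈ Set.Ioi (0:ℝ), h1 N z < 0 :=
      neg_of_pos_deriv (fun z hz => hasDerivAt_h1 N hz) hh2 (tendsto_h1 N)
    exact pos_of_neg_deriv (fun z hz => hasDerivAt_h0 N hz) hh1 (tendsto_h0 N) y hy
  · rw [hN.neg_one_pow]
    have hh2 : ∀ z ∈ Set.Ioi (0:ℝ), h2 N z < 0 := by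
      intro z hz
      have := h2_sign N (hz : (0:ℝ) < z)
      rw [hN.neg_one_pow] at this
      linarith
    have hh1 : ∀ z ∈ Set.Ioi (0:ℝ), 0 < h1 N z :=
      pos_of_neg_deriv (fun z hz => hasDerivAt_h1 N hz) hh2 (tendsto_h1 N)
    have := neg_of_pos_deriv (fun z hz => hasDerivAt_h0 N hz) hh1 (tendsto_h0 N) y hy
    linarith

/-! The Gamma-function series side. -/

lemma sum_gI (x : ℝ) (K : ℕ) : ∑ k ∈ Finset.range K, gI (x+k)
    = (x+K+1/2) * Real.log (x+K) + (1/2-x) * Real.log x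
      - ∑ j ∈ Finset.range (K+1), Real.log (x+j) - K := by
  induction K with
  | zero => simp; ring
  | succ K ih =>
    rw [Finset.sum_range_succ, ih, Finset.sum_range_succ (f := fun j => Real.log (x+j)) (n := K+1)]
    push_cast
    rw [show x + ((K:ℝ)+1) = (x + K) + 1 from by ring]
    rw [gI]
    ring

lemma log_gammaSeq {x : ℝ} (hx : 0 < x) {K : ℕ} (hK : 1 ≤ K) :
    Real.log (Real.GammaSeq x K)
      = x * Real.log K + Real.log (Nat.factorial K) - ∑ j ∈ Finset.range (K+1), Real.log (x+j) := by
  have hKpos : (0:ℝ) < K := by exact_mod_cast hK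
  have h1 : ((K:ℝ)) ^ x ≠ 0 := by
    have := Real.rpow_pos_of_pos hKpos x
    positivity
  have h2 : ((Nat.factorial K : ℕ):ℝ) ≠ 0 := by
    have := K.factorial_pos
    positivity
  have h3 : ∀ j ∈ Finset.range (K+1), x + (j:ℝ) ≠ 0 := by
    intro j _
    positivity
  have h4 : (∏ j ∈ Finset.range (K+1), (x + (j:ℝ))) ≠ 0 := Finset.prod_ne_zero_iff.mpr h3
  rw [Real.GammaSeq, Real.log_div (mul_ne_zero h1 h2) h4, Real.log_mul h1 h2,
    Real.log_rpow hKpos, Real.log_prod h3]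

lemma log_factorial {K : ℕ} (hK : 1 ≤ K) :
    Real.log (Nat.factorial K) = Real.log (Stirling.stirlingSeq K) + (1/2)*Real.log 2 + (1/2)*Real.log K
      + K * Real.log K - K := by
  have hKpos : (0:ℝ) < K := by exact_mod_cast hK
  have hsq : (0:ℝ) < Real.sqrt (2*K) := Real.sqrt_pos.mpr (by positivity)
  have hpow : (0:ℝ) < ((K:ℝ)/Real.exp 1)^K := by positivity
  have hfac : ((Nat.factorial K : ℕ):ℝ) = Stirling.stirlingSeq K * (Real.sqrt (2*K) * ((K:ℝ)/Real.exp 1)^K) := by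
    rw [Stirling.stirlingSeq]
    field_simp
  rw [hfac, Real.log_mul, Real.log_mul (ne_of_gt hsq) (ne_of_gt hpow), Real.log_sqrt (by positivity),
    Real.log_pow, Real.log_mul (two_ne_zero) (ne_of_gt hKpos), Real.log_div (ne_of_gt hKpos)
    (ne_of_gt (Real.exp_pos 1)), Real.log_exp]
  · ring
  · have hst : (0:ℝ) < Stirling.stirlingSeq K := by
      rw [Stirling.stirlingSeq]
      have := K.factorial_pos
      positivity
    exact ne_of_gt hst
  · positivity

lemma tendsto_log_stirling :
    Filter.Tendsto (fun K : ℕ => Real.log (Stirling.stirlingSeq K)) Filter.atTop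
      (𝓝 ((1/2) * Real.log π)) := by
  have hπ : Real.sqrt π ≠ 0 := by
    have := Real.pi_pos
    positivity
  have := ((Real.continuousAt_log hπ).tendsto).comp Stirling.tendsto_stirlingSeq_sqrt_pi
  rw [Real.log_sqrt Real.pi_pos.le] at this
  simpa [div_eq_mul_inv, mul_comm, Function.comp_def] using this

lemma tendsto_sum_gI {x : ℝ} (hx : 0 < x) :
    Filter.Tendsto (fun K : ℕ => ∑ k ∈ Finset.range K, gI (x+k)) Filter.atTop
      (𝓝 (Real.log (Real.Gamma x) - stirlingP x)) := by
  have hA : Filter.Tendsto (fun K : ℕ => Real.log (Real.GammaSeq x K)) Filter.atTop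
      (𝓝 (Real.log (Real.Gamma x))) :=
    ((Real.continuousAt_log (ne_of_gt (Real.Gamma_pos_of_pos hx))).tendsto).comp
      (Real.GammaSeq_tendsto_Gamma x)
  have hE2 : Filter.Tendsto (fun K : ℕ => Real.log (1 + x/K)) Filter.atTop (𝓝 0) := by
    have h1 : Filter.Tendsto (fun K : ℕ => 1 + x/(K:ℝ)) Filter.atTop (𝓝 1) := by
      have := (tendsto_const_div_atTop_nhds_zero_nat x).const_add (1:ℝ)
      simpa using this
    have := ((Real.continuousAt_log one_ne_zero).tendsto).comp h1
    simpa [Function.comp_def] using this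
  have hE1 : Filter.Tendsto (fun K : ℕ => (K:ℝ) * Real.log (1 + x/K)) Filter.atTop (𝓝 x) :=
    (Real.tendsto_mul_log_one_add_div_atTop x).comp tendsto_natCast_atTop_atTop
  have hE : Filter.Tendsto (fun K : ℕ => (x+(K:ℝ)+1/2) * Real.log (1 + x/K) + (1/2-x)*Real.log x
      - Real.log (Stirling.stirlingSeq K) - (1/2)*Real.log 2) Filter.atTop
      (𝓝 (x + (1/2-x)*Real.log x - (1/2)*Real.log π - (1/2)*Real.log 2)) := by
    have hcomb : Filter.Tendsto (fun K : ℕ => (K:ℝ) * Real.log (1 + x/K)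
        + (x+1/2) * Real.log (1 + x/K) + (1/2-x)*Real.log x
        - Real.log (Stirling.stirlingSeq K) - (1/2)*Real.log 2) Filter.atTop
        (𝓝 (x + (x+1/2)*0 + (1/2-x)*Real.log x - (1/2)*Real.log π - (1/2)*Real.log 2)) := by
      exact ((((hE1.add (hE2.const_mul (x+1/2))).add
        (tendsto_const_nhds (x := (1/2-x)*Real.log x))).sub
        tendsto_log_stirling).sub (tendsto_const_nhds (x := (1/2)*Real.log 2)))
    rw [show x + (x+1/2)*0 + (1/2-x)*Real.log x - (1/2)*Real.log π - (1/2)*Real.log 2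
      = x + (1/2-x)*Real.log x - (1/2)*Real.log π - (1/2)*Real.log 2 from by ring] at hcomb
    apply hcomb.congr
    intro K
    ring
  have heq : ∀ᶠ K in Filter.atTop, Real.log (Real.GammaSeq x K)
      + ((x+(K:ℝ)+1/2) * Real.log (1 + x/K) + (1/2-x)*Real.log x
        - Real.log (Stirling.stirlingSeq K) - (1/2)*Real.log 2)
      = ∑ k ∈ Finset.range K, gI (x+k) := by
    filter_upwards [Filter.eventually_ge_atTop 1] with K hK
    have hKpos : (0:ℝ) < K := by exact_mod_cast hK
    have hxK : Real.log (x + K) = Real.log K + Real.log (1 + x/K) := by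
      rw [show x + (K:ℝ) = (K:ℝ) * (1 + x/K) from by field_simp; ring]
      rw [Real.log_mul (ne_of_gt hKpos) (by positivity)]
    rw [sum_gI, log_gammaSeq hx hK, log_factorial hK, hxK]
    ring
  have := hA.add hE
  have htot := this.congr' heq
  have hval : Real.log (Real.Gamma x) + (x + (1/2-x)*Real.log x - (1/2)*Real.log π - (1/2)*Real.log 2)
      = Real.log (Real.Gamma x) - stirlingP x := by
    rw [stirlingP, Real.log_mul two_ne_zero (ne_of_gt Real.pi_pos)]
    ring
  rwa [hval] at htot

lemma stirlingR_eq_RzI (N : ℕ) (x : ℝ) : stirlingR N x = RzI N x := by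
  induction N with
  | zero => simp [stirlingR, RzI]
  | succ N ih =>
    have hL : stirlingR (N+1) x = stirlingR N x
        + ((bernoulli (2*(N+1)) : ℚ) : ℝ)
          / (2*((N+1:ℕ):ℝ) * (2*((N+1:ℕ):ℝ) - 1) * x ^ (2*(N+1) - 1)) := by
      rw [stirlingR, Finset.sum_Icc_succ_top (by omega), ← stirlingR]
    have hR : RzI (N+1) x = RzI N x
        + bb (2*N+2) / ((2*(N:ℝ)+2) * (2*(N:ℝ)+1)) * x ^ (-(2*(N:ℤ)+1)) := by
      rw [RzI, Finset.sum_range_succ, ← RzI]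
    rw [hL, hR, ih]
    congr 1
    rw [show 2*(N+1) = 2*N+2 from by omega, show 2*N+2-1 = 2*N+1 from by omega]
    rw [show (-(2*(N:ℤ)+1)) = -((2*N+1 : ℕ):ℤ) from by push_cast; ring, zpow_negnat]
    rw [← div_eq_mul_inv, div_div, bb]
    push_cast
    ring_nf

lemma tendsto_sum_h0 {x : ℝ} (hx : 0 < x) (N : ℕ) :
    Filter.Tendsto (fun K : ℕ => ∑ k ∈ Finset.range K, h0 N (x+k)) Filter.atTop
      (𝓝 (Real.log (Real.Gamma x) - stirlingP x - RzI N x)) := by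
  set f : ℕ → ℝ := fun k => RzI N (x+k) with hf
  have hsum_eq : ∀ K : ℕ, ∑ k ∈ Finset.range K, h0 N (x+k)
      = (∑ k ∈ Finset.range K, gI (x+k)) + (f K - f 0) := by
    intro K
    rw [← Finset.sum_range_sub f K, ← Finset.sum_add_distrib]
    apply Finset.sum_congr rfl
    intro k _
    rw [h0, hf]
    simp only
    rw [Nat.cast_add, Nat.cast_one, show x + ((k:ℝ)+1) = (x + k) + 1 from by ring]
    ring
  have hfK : Filter.Tendsto (fun K : ℕ => f K) Filter.atTop (𝓝 0) := by
    rw [hf]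
    exact (tendsto_RzI N).comp (Filter.tendsto_atTop_add_const_left _ x tendsto_natCast_atTop_atTop)
  have htot := (tendsto_sum_gI hx).add (hfK.sub_const (f 0))
  have : Real.log (Real.Gamma x) - stirlingP x + (0 - f 0)
      = Real.log (Real.Gamma x) - stirlingP x - RzI N x := by
    rw [hf]
    norm_num
    ring
  rw [this] at htot
  apply htot.congr
  intro K
  rw [hsum_eq]


end ImpensAux

/-- **Impens's inequality**: for all `x > 0` and all `n, m ≥ 0`,
`R_{2n}(x) < ln Γ(x) − P(x) < R_{2m+1}(x)`. -/
theorem impens_inequality (x : ℝ) (hx : 0 < x) (n m : ℕ) :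
    stirlingR (2 * n) x < Real.log (Real.Gamma x) - stirlingP x ∧
      Real.log (Real.Gamma x) - stirlingP x < stirlingR (2 * m + 1) x := by
  constructor
  · set N := 2*n with hN
    have hterm : ∀ k : ℕ, 0 < h0 N (x+k) := by
      intro k
      have hpos : (0:ℝ) < x + k := by positivity
      have := h0_sign N hpos
      rwa [(even_two_mul n).neg_one_pow, one_mul] at this
    have hlow : h0 N x ≤ Real.log (Real.Gamma x) - stirlingP x - RzI N x := by
      apply ge_of_tendsto (tendsto_sum_h0 hx N)
      filter_upwards [Filter.eventually_ge_atTop 1] with K hK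
      have h1 := Finset.single_le_sum (f := fun k : ℕ => h0 N (x+k))
        (fun k _ => le_of_lt (hterm k)) (Finset.mem_range.mpr (show 0 < K by omega))
      norm_num at h1
      exact h1
    have h00 : 0 < h0 N x := by simpa using hterm 0
    rw [stirlingR_eq_RzI]
    linarith
  · set N := 2*m+1 with hN
    have hterm : ∀ k : ℕ, h0 N (x+k) < 0 := by
      intro k
      have hpos : (0:ℝ) < x + k := by positivity
      have := h0_sign N hpos
      rw [Odd.neg_one_pow ⟨m, by omega⟩] at this
      linarith
    have hlow : Real.log (Real.Gamma x) - stirlingP x - RzI N x ≤ h0 N x := by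
      apply le_of_tendsto (tendsto_sum_h0 hx N)
      filter_upwards [Filter.eventually_ge_atTop 1] with K hK
      have := Finset.single_le_sum (f := fun k : ℕ => -(h0 N (x+k)))
        (fun k _ => by simpa using (hterm k).le) (Finset.mem_range.mpr (show 0 < K by omega))
      have hsum : ∑ k ∈ Finset.range K, -(h0 N (x+k)) = -∑ k ∈ Finset.range K, h0 N (x+k) := by
        rw [Finset.sum_neg_distrib]
      rw [hsum] at this
      norm_num at this
      linarith
    have h00 : h0 N x < 0 := by simpa using hterm 0
    rw [stirlingR_eq_RzI]
    linarith
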